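/- For positive definite n×n matrices P and Q, log P − log Q = ∫₀^∞ [(Q+uI)⁻¹ − (P+uI)⁻¹] du = ∫₀^∞ (Q+uI)⁻¹ (P−Q) (P+uI)⁻¹ du. -/

import Mathlib

open Matrix MeasureTheory
open scoped ComplexOrder

/-- Entrywise integral of a matrix-valued function over a set `s ⊆ ℝ`. -/
noncomputable def mInt {n : ℕ} (s : Set ℝ) (f : ℝ → Matrix (Fin n) (Fin n) ℂ) :
    Matrix (Fin n) (Fin n) ℂ :=
  Matrix.of fun i j => ∫ u in s, f u i j

/-- Matrix logarithm via functional calculus (junk value `0` off the Hermitian matrices). -/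
noncomputable def mlog {n : ℕ} (A : Matrix (Fin n) (Fin n) ℂ) :
    Matrix (Fin n) (Fin n) ℂ :=
  if h : A.IsHermitian then h.cfc Real.log else 0

/-! For `x > 0` the integrand `(1 + u)⁻¹ - (x + u)⁻¹` is the derivative of
`log (1 + u) - log (x + u)`, which equals `-log x` at `u = 0` and tends to `0` at infinity, so
`∫₀^∞ ((1 + u)⁻¹ - (x + u)⁻¹) du = log x`. Applied to the eigenvalues of a positive definite `A`
through the functional calculus this gives `log A = ∫₀^∞ ((1 + u)⁻¹ - (A + u)⁻¹) du` entrywise.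
Subtracting the identities for `P` and `Q` cancels the scalar term `(1 + u)⁻¹`, and the resolvent
identity `B⁻¹ - A⁻¹ = B⁻¹ (A - B) A⁻¹` gives the second form. -/

open Set Filter Topology

namespace Real

lemma hasDerivAt_log_one_add_sub_log_add {x u : ℝ} (hx : 0 < x) (hu : 0 ≤ u) :
    HasDerivAt (fun v => log (1 + v) - log (x + v)) ((1 + u)⁻¹ - (x + u)⁻¹) u :=
  ((((hasDerivAt_id u).const_add 1).log (by positivity)).sub
    (((hasDerivAt_id u).const_add x).log (by positivity))).congr_deriv (by simp)

lemma tendsto_log_one_add_sub_log_add_atTop (x : ℝ) :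
    Tendsto (fun v => log (1 + v) - log (x + v)) atTop (𝓝 0) := by
  simpa [add_comm] using (tendsto_log_comp_add_sub_log 1).sub (tendsto_log_comp_add_sub_log x)

lemma integrableOn_inv_one_add_sub_inv_add {x : ℝ} (hx : 0 < x) :
    IntegrableOn (fun u => (1 + u)⁻¹ - (x + u)⁻¹) (Ioi 0) := by
  have hderiv (u : ℝ) (hu : u ∈ Ici 0) := hasDerivAt_log_one_add_sub_log_add hx hu
  rcases le_total 1 x with h | h
  · refine integrableOn_Ioi_deriv_of_nonneg' hderiv (fun u hu => ?_)
      (tendsto_log_one_add_sub_log_add_atTop x)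
    have : 0 < 1 + u := by linarith [mem_Ioi.mp hu]
    exact sub_nonneg.mpr (inv_anti₀ this (by linarith))
  · refine integrableOn_Ioi_deriv_of_nonpos' hderiv (fun u hu => ?_)
      (tendsto_log_one_add_sub_log_add_atTop x)
    have : 0 < x + u := by linarith [mem_Ioi.mp hu]
    exact sub_nonpos.mpr (inv_anti₀ this (by linarith))

lemma integral_inv_one_add_sub_inv_add {x : ℝ} (hx : 0 < x) :
    ∫ u in Ioi 0, ((1 + u)⁻¹ - (x + u)⁻¹) = log x := by
  simpa using integral_Ioi_of_hasDerivAt_of_tendsto'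
    (fun u hu => hasDerivAt_log_one_add_sub_log_add hx hu)
    (integrableOn_inv_one_add_sub_inv_add hx) (tendsto_log_one_add_sub_log_add_atTop x)

end Real

namespace Matrix

variable {𝕜 n : Type*} [RCLike 𝕜] [Fintype n] [DecidableEq n] {A : Matrix n n 𝕜}

lemma IsHermitian.cfc_apply_eq_sum (hA : A.IsHermitian) (f : ℝ → ℝ) (i j : n) :
    cfc f A i j = ∑ k, (hA.eigenvectorUnitary : Matrix n n 𝕜) i k
      * (f (hA.eigenvalues k) : 𝕜) * star ((hA.eigenvectorUnitary : Matrix n n 𝕜) j k) := by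
  simp [hA.cfc_eq, IsHermitian.cfc, mul_apply, diagonal]

section Integral

variable {X : Type*} [MeasurableSpace X] {μ : Measure X} {g : X → ℝ → ℝ}

lemma IsHermitian.integrable_cfc_apply (hA : A.IsHermitian)
    (hg : ∀ k, Integrable (fun u => g u (hA.eigenvalues k)) μ) (i j : n) :
    Integrable (fun u => cfc (g u) A i j) μ := by
  simp_rw [hA.cfc_apply_eq_sum]
  exact integrable_finsetSum _ fun k _ => ((hg k).ofReal.const_mul _).mul_const _

lemma IsHermitian.integral_cfc_apply (hA : A.IsHermitian)
    (hg : ∀ k, Integrable (fun u => g u (hA.eigenvalues k)) μ) (i j : n) :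
    ∫ u, cfc (g u) A i j ∂μ = cfc (fun x => ∫ u, g u x ∂μ) A i j := by
  simp_rw [hA.cfc_apply_eq_sum]
  rw [integral_finsetSum _ fun k _ => ((hg k).ofReal.const_mul _).mul_const _]
  simp_rw [integral_mul_const, integral_const_mul, integral_ofReal]

end Integral

lemma PosDef.spectrum_pos (hA : A.PosDef) {x : ℝ} (hx : x ∈ spectrum ℝ A) : 0 < x := by
  obtain ⟨k, rfl⟩ := hA.1.spectrum_real_eq_range_eigenvalues ▸ hx
  exact hA.eigenvalues_pos k

lemma PosDef.isUnit_add_smul_one (hA : A.PosDef) {u : ℝ} (hu : 0 ≤ u) :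
    IsUnit (A + u • 1) :=
  (hA.add_posSemidef (PosSemidef.one.smul hu)).isUnit

lemma cfc_inv_add_eq_inv_add_smul_one (hA : A.IsHermitian) {u : ℝ}
    (hu : ∀ x ∈ spectrum ℝ A, x + u ≠ 0) :
    cfc (fun x => (x + u)⁻¹) A = (A + u • 1)⁻¹ := by
  rw [cfc_inv _ A hu, cfc_add_const u (fun x => x) A, cfc_id' ℝ A,
    Algebra.algebraMap_eq_smul_one, nonsing_inv_eq_ringInverse]

lemma PosDef.cfc_inv_one_add_sub_inv_add (hA : A.PosDef) {u : ℝ} (hu : 0 ≤ u) :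
    cfc (fun x => (1 + u)⁻¹ - (x + u)⁻¹) A = (1 + u)⁻¹ • 1 - (A + u • 1)⁻¹ := by
  have hu' : ∀ x ∈ spectrum ℝ A, x + u ≠ 0 := fun x hx =>
    (add_pos_of_pos_of_nonneg (hA.spectrum_pos hx) hu).ne'
  rw [cfc_sub (fun _ => (1 + u)⁻¹) (fun x => (x + u)⁻¹) A
      (hg := (continuousOn_id.add continuousOn_const).inv₀ hu'),
    cfc_const _ A hA.1.isSelfAdjoint, cfc_inv_add_eq_inv_add_smul_one hA.1 hu',
    Algebra.algebraMap_eq_smul_one]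

lemma PosDef.integrableOn_cfc_inv_one_add_sub_inv_add_apply (hA : A.PosDef) (i j : n) :
    IntegrableOn (fun u : ℝ => cfc (fun x => (1 + u)⁻¹ - (x + u)⁻¹) A i j) (Ioi 0) :=
  hA.1.integrable_cfc_apply (g := fun u x => (1 + u)⁻¹ - (x + u)⁻¹)
    (fun k => Real.integrableOn_inv_one_add_sub_inv_add (hA.eigenvalues_pos k)) i j

lemma PosDef.integral_cfc_inv_one_add_sub_inv_add_apply (hA : A.PosDef) (i j : n) :
    ∫ u in Ioi (0 : ℝ), cfc (fun x => (1 + u)⁻¹ - (x + u)⁻¹) A i j = cfc Real.log A i j := by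
  rw [hA.1.integral_cfc_apply (g := fun u x => (1 + u)⁻¹ - (x + u)⁻¹)
      (fun k => Real.integrableOn_inv_one_add_sub_inv_add (hA.eigenvalues_pos k)),
    cfc_congr fun x hx => Real.integral_inv_one_add_sub_inv_add (hA.spectrum_pos hx)]

end Matrix

lemma mlog_eq_cfc {n : ℕ} {A : Matrix (Fin n) (Fin n) ℂ} (hA : A.IsHermitian) :
    mlog A = cfc Real.log A := by
  rw [mlog, dif_pos hA, hA.cfc_eq]

lemma mInt_congr {n : ℕ} {s : Set ℝ} (hs : MeasurableSet s)
    {f g : ℝ → Matrix (Fin n) (Fin n) ℂ} (hfg : EqOn f g s) : mInt s f = mInt s g := by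
  ext i j
  exact setIntegral_congr_fun hs fun u hu => congrFun₂ (hfg hu) i j

/-- Integral representations of `log P - log Q` for positive definite `P, Q`. -/
theorem log_sub_log_integral {n : ℕ} (P Q : Matrix (Fin n) (Fin n) ℂ)
    (hP : P.PosDef) (hQ : Q.PosDef) :
    mlog P - mlog Q
      = mInt (Set.Ioi (0 : ℝ)) (fun u => (Q + u • 1)⁻¹ - (P + u • 1)⁻¹) ∧
    mlog P - mlog Q
      = mInt (Set.Ioi (0 : ℝ)) (fun u => (Q + u • 1)⁻¹ * (P - Q) * (P + u • 1)⁻¹) := by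
  set r : ℝ → ℝ → ℝ := fun u x => (1 + u)⁻¹ - (x + u)⁻¹
  have hlog : mlog P - mlog Q = mInt (Ioi 0) fun u : ℝ => cfc (r u) P - cfc (r u) Q := by
    ext i j
    simp only [mInt, of_apply, Matrix.sub_apply]
    rw [integral_sub (hP.integrableOn_cfc_inv_one_add_sub_inv_add_apply i j)
        (hQ.integrableOn_cfc_inv_one_add_sub_inv_add_apply i j),
      hP.integral_cfc_inv_one_add_sub_inv_add_apply, mlog_eq_cfc hP.1,
      hQ.integral_cfc_inv_one_add_sub_inv_add_apply, mlog_eq_cfc hQ.1]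
  have hres : EqOn (fun u => cfc (r u) P - cfc (r u) Q)
      (fun u => (Q + u • 1)⁻¹ - (P + u • 1)⁻¹) (Ioi 0) := fun u hu => by
    simp only [r, hP.cfc_inv_one_add_sub_inv_add (le_of_lt hu),
      hQ.cfc_inv_one_add_sub_inv_add (le_of_lt hu), sub_sub_sub_cancel_left]
  have hsandwich : EqOn (fun u : ℝ => (Q + u • 1)⁻¹ - (P + u • 1)⁻¹)
      (fun u => (Q + u • 1)⁻¹ * (P - Q) * (P + u • 1)⁻¹) (Ioi 0) := fun u hu => by
    have hunits := iff_of_true (hQ.isUnit_add_smul_one (le_of_lt hu))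
      (hP.isUnit_add_smul_one (le_of_lt hu))
    simp only [inv_sub_inv hunits, add_sub_add_right_eq_sub]
  exact ⟨hlog.trans (mInt_congr measurableSet_Ioi hres),
    hlog.trans (mInt_congr measurableSet_Ioi (hres.trans hsandwich))⟩
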